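/- Let (G, v₀) be a multiplayer quantitative reachability game, Γ = 2·|Π|·|V|, and d = Γ + 3·|V|. If there exists a goal-optimal and dev-optimal secure equilibrium in the truncated game 𝒯^d, then there exists a secure equilibrium in (G, v₀) that is finite-memory. -/

import Mathlib

open scoped Classical ENat

/-- A multiplayer quantitative reachability game: a finite directed graph whose
vertices are partitioned among the players (via `owner`), every vertex has an
outgoing edge, and each player `i` has a nonempty goal set `F i`. -/
structure QRGame (ι V : Type) where
  owner : V → ι
  E : V → V → Prop
  total : ∀ v, ∃ w, E v w
  F : ι → Set V
  F_ne : ∀ i, (F i).Nonempty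

namespace QRGame

variable {ι V : Type}

/-- Histories are encoded as *reversed* nonempty lists: the head is the current
vertex, the last element is the initial vertex `v₀`, and consecutive elements
are joined by edges of the graph. -/
def IsHist (G : QRGame ι V) (v₀ : V) : List V → Prop
  | [] => False
  | [v] => v = v₀
  | v :: w :: t => G.E w v ∧ IsHist G v₀ (w :: t)

/-- The current (i.e. most recent) vertex of a history. -/
def cur (v₀ : V) (h : List V) : V := h.headD v₀

/-- `σ` is a valid strategy of player `i`: on every history whose current
vertex belongs to player `i`, it chooses a successor along an edge. -/
def IsStrat (G : QRGame ι V) (v₀ : V) (i : ι) (σ : List V → V) : Prop :=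
  ∀ h : List V, G.IsHist v₀ h → G.owner (cur v₀ h) = i → G.E (cur v₀ h) (σ h)

/-- A strategy profile: one valid strategy for each player. -/
def IsProfile (G : QRGame ι V) (v₀ : V) (σ : ι → List V → V) : Prop :=
  ∀ i, G.IsStrat v₀ i (σ i)

/-- The history reached after `n` further steps when all players follow the
profile `σ` from the history `h` on. -/
def histFrom (G : QRGame ι V) (v₀ : V) (σ : ι → List V → V) (h : List V) : ℕ → List V
  | 0 => h
  | n + 1 =>
      σ (G.owner (cur v₀ (histFrom G v₀ σ h n))) (histFrom G v₀ σ h n)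
        :: histFrom G v₀ σ h n

/-- The full play (indexed from time `0`) whose prefix is the history `h` and
which is consistent with the profile `σ` after `h`. -/
def fullPlay (G : QRGame ι V) (v₀ : V) (σ : ι → List V → V) (h : List V) (t : ℕ) : V :=
  (G.histFrom v₀ σ h t).reverse.getD t v₀

/-- The outcome `⟨(σ_i)⟩_{v₀}` of the profile `σ` from the initial vertex. -/
def outcome (G : QRGame ι V) (v₀ : V) (σ : ι → List V → V) : ℕ → V :=
  G.fullPlay v₀ σ [v₀]

/-- Cost of player `i` for a play `ρ`: the least `l` with `ρ l ∈ F i`,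
and `⊤` (i.e. `+∞`) if there is no such `l`. -/
noncomputable def cost (G : QRGame ι V) (i : ι) (ρ : ℕ → V) : ℕ∞ :=
  ⨅ l ∈ {l : ℕ | ρ l ∈ G.F i}, (l : ℕ∞)

/-- Cost of player `i` for the finite prefix `ρ₀ … ρ_{m-1}` of a play. -/
noncomputable def costLT (G : QRGame ι V) (i : ι) (ρ : ℕ → V) (m : ℕ) : ℕ∞ :=
  ⨅ l ∈ {l : ℕ | l < m ∧ ρ l ∈ G.F i}, (l : ℕ∞)

end QRGame

/-- The preference relation `≺_j` of player `j` on cost profiles: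
`x ≺_j y` iff `x j > y j`, or `x j = y j`, every player's cost does not
decrease, and some player's cost strictly increases. -/
def Prec {ι : Type} (j : ι) (x y : ι → ℕ∞) : Prop :=
  y j < x j ∨ (x j = y j ∧ (∀ i, x i ≤ y i) ∧ ∃ i, x i < y i)

namespace QRGame

variable {ι V : Type} [DecidableEq ι]

/-- `σ` restricted after the history `h` is a secure equilibrium in the subgame
`(G|_h, cur h)`: no player `j` has a `≺_j`-profitable deviation after `h`
(costs are computed on the whole play, including the prefix `h`). -/
def IsSecureAfter (G : QRGame ι V) (v₀ : V) (σ : ι → List V → V) (h : List V) : Prop :=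
  ¬ ∃ (j : ι) (σ' : List V → V), G.IsStrat v₀ j σ' ∧
      Prec j (fun i => G.cost i (G.fullPlay v₀ σ h))
        (fun i => G.cost i (G.fullPlay v₀ (Function.update σ j σ') h))

/-- A secure equilibrium in `(G, v₀)`. -/
def IsSecure (G : QRGame ι V) (v₀ : V) (σ : ι → List V → V) : Prop :=
  G.IsSecureAfter v₀ σ [v₀]

/-- A subgame perfect secure equilibrium: a secure equilibrium in every subgame. -/
def IsSPSE (G : QRGame ι V) (v₀ : V) (σ : ι → List V → V) : Prop :=
  ∀ h : List V, G.IsHist v₀ h → G.IsSecureAfter v₀ σ h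

end QRGame

namespace QRGame

variable {ι V : Type}

/-- A strategy is finite-memory if the equivalence relation identifying two
histories `h`, `h'` whenever `σ` answers the same on `hδ` and `h'δ` for every
continuation `δ` has finite index; equivalently, the map sending a history to
the induced answering function has finite range.  (Histories are reversed
lists, so the continuation `δ` is appended in front.) -/
def FinMem (σ : List V → V) : Prop :=
  (Set.range fun h : List V => fun δ : List V => σ (δ ++ h)).Finite

end QRGame

namespace QRGame

variable {ι V : Type}

/-- `σ` is a valid strategy of player `i` in the truncated game `𝒯^d` played on
the truncation of the unraveling of `G` to depth `d`: it chooses a successor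
along an edge on every history of length (number of edges) `< d`, i.e. on every
history whose list of vertices has length `≤ d`. -/
def IsStratTrunc (G : QRGame ι V) (v₀ : V) (d : ℕ) (i : ι) (σ : List V → V) : Prop :=
  ∀ h : List V, G.IsHist v₀ h → h.length ≤ d →
    G.owner (cur v₀ h) = i → G.E (cur v₀ h) (σ h)

end QRGame

namespace QRGame

variable {ι V : Type} [DecidableEq ι]

/-- `σ` restricted after the history `h` is a secure equilibrium in the subgame
of the truncated game `𝒯^d` after `h`: costs are computed on the prefix of the
play of length `d` (vertices of indices `0, …, d`). -/
def IsSecureTruncAfter (G : QRGame ι V) (v₀ : V) (d : ℕ)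
    (σ : ι → List V → V) (h : List V) : Prop :=
  ¬ ∃ (j : ι) (σ' : List V → V), G.IsStratTrunc v₀ d j σ' ∧
      Prec j (fun i => G.costLT i (G.fullPlay v₀ σ h) (d + 1))
        (fun i => G.costLT i (G.fullPlay v₀ (Function.update σ j σ') h) (d + 1))

/-- A secure equilibrium in the truncated game `𝒯^d`. -/
def IsSecureTrunc (G : QRGame ι V) (v₀ : V) (d : ℕ) (σ : ι → List V → V) : Prop :=
  G.IsSecureTruncAfter v₀ d σ [v₀]

/-- A subgame perfect secure equilibrium in the truncated game `𝒯^d`: a secure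
equilibrium in the subgame after every history of the truncated tree. -/
def IsSPSETrunc (G : QRGame ι V) (v₀ : V) (d : ℕ) (σ : ι → List V → V) : Prop :=
  ∀ h : List V, G.IsHist v₀ h → h.length ≤ d + 1 → G.IsSecureTruncAfter v₀ d σ h

end QRGame

namespace QRGame

variable {ι V : Type} [Fintype V]

/-- Goal-optimality (with bound `Γ`) in the truncated game `𝒯^d`: costs are
computed on the outcome of the truncated game, i.e. on the prefix of length `d`. -/
noncomputable def GoalOptTrunc (G : QRGame ι V) (v₀ : V) (d : ℕ)
    (σ : ι → List V → V) (Γ : ℕ) : Prop :=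
  ∀ i, G.costLT i (G.outcome v₀ σ) (d + 1) ≠ ⊤ →
    G.costLT i (G.outcome v₀ σ) (d + 1) < (Γ : ℕ∞)

/-- The bound `D = max{Cost_i(ρ) : Cost_i(ρ) < +∞} + |V|` attached to the
outcome of a profile in the truncated game `𝒯^d`. -/
noncomputable def devBoundTrunc (G : QRGame ι V) (v₀ : V) (d : ℕ)
    (σ : ι → List V → V) : ℕ :=
  (⨆ i ∈ {i : ι | G.costLT i (G.outcome v₀ σ) (d + 1) ≠ ⊤},
      G.costLT i (G.outcome v₀ σ) (d + 1)).toNat + Fintype.card V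

variable [DecidableEq ι]

/-- Dev-optimality of a secure equilibrium in the truncated game `𝒯^d`. -/
noncomputable def DevOptTrunc (G : QRGame ι V) (v₀ : V) (d : ℕ)
    (σ : ι → List V → V) : Prop :=
  ∀ (j : ι) (σ' : List V → V), G.IsStratTrunc v₀ d j σ' →
    ¬ Prec j
        (fun i => G.costLT i (G.outcome v₀ σ) (G.devBoundTrunc v₀ d σ))
        (fun i => G.costLT i (G.outcome v₀ (Function.update σ j σ'))
          (G.devBoundTrunc v₀ d σ))

end QRGame


/-!
Let `ρ` be the outcome of the truncated equilibrium `σ` and `D` its dev-optimality horizon.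
Goal-optimality puts every finite cost of `ρ` below `D ≤ Γ + |V|`, and by pigeonhole `ρ` repeats
a vertex `ρ_a = ρ_b` with `D ≤ a < b ≤ D + |V|`, so the lasso `ρ₀ … ρ_{b-1} (ρ_a … ρ_{b-1})^ω`
has the cost profile of `ρ` in `𝒯^d`. Everybody follows the lasso. If player `j` leaves it at
time `t ≤ b`, the others keep playing `σ` up to time `D`; after that, or right away if `t > b`,
they keep `j` out of its attractor of `F j`. If `ρ` misses `F j`, security of `σ` in `𝒯^d` keeps
`j` out of that attractor before time `d - |V|` while the others play `σ`, so `j` still misses its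
goal after deviating. Hence an early deviation would stay profitable when cut at time `D`, where it
is a deviation in `𝒯^d` that dev-optimality rules out, and a late one changes no finite cost.
Beyond length `D` the strategy only remembers the deviator, the position on the loop and the
current vertex, so it has finite memory.
-/

lemma Monotone.exists_le_natCard_succ_eq {V : Type} [Finite V] {f : ℕ → Set V}
    (hf : Monotone f) : ∃ k ≤ Nat.card V, f (k + 1) = f k := by
  by_contra! hne
  have hgrow : ∀ k ≤ Nat.card V + 1, k ≤ (f k).ncard := by
    intro k hk
    induction k with
    | zero => exact Nat.zero_le _
    | succ k ih =>
      have hss : f k ⊂ f (k + 1) := (hf k.le_succ).ssubset_of_ne (hne k (by omega)).symm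
      exact (ih (by omega)).trans_lt (Set.ncard_lt_ncard hss (Set.toFinite _))
  have := (hgrow _ le_rfl).trans (Set.ncard_le_card _)
  omega

lemma Fintype.exists_lt_le_add_card_eq {V : Type} [Fintype V] (f : ℕ → V) (n : ℕ) :
    ∃ a b, n ≤ a ∧ a < b ∧ b ≤ n + Fintype.card V ∧ f a = f b := by
  obtain ⟨x, y, hxy, hf⟩ := Fintype.exists_ne_map_eq_of_card_lt
    (fun k : Fin (Fintype.card V + 1) => f (n + k)) (by simp)
  rcases lt_or_gt_of_ne (Fin.val_injective.ne hxy) with h | h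
  · exact ⟨n + x, n + y, by omega, by omega, by omega, hf⟩
  · exact ⟨n + y, n + x, by omega, by omega, by omega, hf.symm⟩

lemma prec_irrefl {ι : Type} (j : ι) (x : ι → ℕ∞) : ¬ Prec j x x := by
  rintro (h | ⟨-, -, i, hi⟩) <;> exact lt_irrefl _ ‹_›

lemma not_prec_of_eq_of_ne_top {ι : Type} {j : ι} {x y : ι → ℕ∞}
    (hfin : ∀ i, x i ≠ ⊤ → y i = x i) (htop : x j = ⊤ → y j = ⊤) : ¬ Prec j x y := by
  rintro (hlt | ⟨-, -, i, hi⟩)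
  · by_cases hj : x j = ⊤
    · exact not_top_lt (htop hj ▸ hlt)
    · exact hlt.ne (hfin j hj)
  · exact hi.ne' (hfin i (ne_top_of_lt hi))

namespace QRGame

variable {ι V : Type}

section Cost

variable (G : QRGame ι V) (i : ι) {ρ ρ' : ℕ → V}

lemma cost_le {m : ℕ} (hm : ρ m ∈ G.F i) : G.cost i ρ ≤ m := iInf₂_le m hm

lemma cost_eq_top_iff : G.cost i ρ = ⊤ ↔ ∀ l, ρ l ∉ G.F i := by
  simp [cost, iInf_eq_top]

lemma costLT_eq_ite (m : ℕ) :
    G.costLT i ρ m = if G.cost i ρ < m then G.cost i ρ else ⊤ := by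
  split_ifs with h
  · obtain ⟨l₀, hl₀, hl₀m⟩ : ∃ l₀, ρ l₀ ∈ G.F i ∧ l₀ < m := by
      by_contra! hall
      exact h.not_ge (le_iInf₂ fun l hl => by exact_mod_cast hall l hl)
    refine le_antisymm (le_iInf₂ fun l hl => ?_) (le_iInf₂ fun l hl => G.cost_le i hl.2)
    rcases lt_or_ge l m with hlm | hlm
    · exact iInf₂_le l ⟨hlm, hl⟩
    · exact (iInf₂_le l₀ ⟨hl₀m, hl₀⟩).trans (by exact_mod_cast hl₀m.le.trans hlm)
  · refine iInf₂_eq_top.2 fun l hl => absurd ((G.cost_le i hl.2).trans_lt ?_) h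
    exact_mod_cast hl.1

lemma costLT_eq_cost {m : ℕ} (h : G.cost i ρ < m) : G.costLT i ρ m = G.cost i ρ := by
  rw [costLT_eq_ite, if_pos h]

lemma costLT_eq_cost_of_ne_top {m : ℕ} (h : G.cost i ρ ≠ ⊤ → G.cost i ρ < m) :
    G.costLT i ρ m = G.cost i ρ := by
  by_cases hi : G.cost i ρ = ⊤
  · rw [costLT_eq_ite, if_neg (by simp [hi]), hi]
  · exact G.costLT_eq_cost i (h hi)

lemma cost_le_costLT (m : ℕ) : G.cost i ρ ≤ G.costLT i ρ m := by
  rw [costLT_eq_ite]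
  split_ifs <;> simp

lemma cost_lt_of_costLT_ne_top {m : ℕ} (h : G.costLT i ρ m ≠ ⊤) : G.cost i ρ < m := by
  by_contra hc
  exact h (by rw [costLT_eq_ite, if_neg hc])

lemma costLT_congr {m : ℕ} (hag : ∀ k < m, ρ k = ρ' k) : G.costLT i ρ m = G.costLT i ρ' m := by
  simp only [costLT]
  congr! 3 with l
  exact and_congr_right fun hl => by rw [hag l hl]

lemma cost_eq_of_eqOn {m : ℕ} (hag : ∀ k < m, ρ k = ρ' k) (h : G.cost i ρ < m) :
    G.cost i ρ' = G.cost i ρ := by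
  have hLT : G.costLT i ρ' m = G.cost i ρ := by rw [← G.costLT_congr i hag, costLT_eq_cost _ _ h]
  have hne : G.costLT i ρ' m ≠ ⊤ := hLT ▸ ne_top_of_lt h
  rw [← hLT, costLT_eq_cost _ _ (G.cost_lt_of_costLT_ne_top i hne)]

variable {G} in
lemma prec_costLT_of_prec_cost {j : ι} {ρ₁ ρ₂ : ℕ → V} {m : ℕ}
    (hfin : ∀ i, G.cost i ρ₁ ≠ ⊤ → G.cost i ρ₁ < m) (htop : G.cost j ρ₁ = ⊤ → G.cost j ρ₂ = ⊤)
    (h : Prec j (fun i => G.cost i ρ₁) (fun i => G.cost i ρ₂)) :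
    Prec j (fun i => G.costLT i ρ₁ m) (fun i => G.costLT i ρ₂ m) := by
  simp only [G.costLT_eq_cost_of_ne_top _ (hfin _)]
  have hj : G.cost j ρ₁ ≠ ⊤ → G.cost j ρ₂ ≤ G.cost j ρ₁ → G.costLT j ρ₂ m = G.cost j ρ₂ :=
    fun hj hle => G.costLT_eq_cost j (hle.trans_lt (hfin j hj))
  rcases h with (hlt : G.cost j ρ₂ < G.cost j ρ₁) | ⟨heq, hle, i₀, hi₀⟩
  · have hne : G.cost j ρ₁ ≠ ⊤ := fun h => not_top_lt (htop h ▸ hlt)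
    exact Or.inl (by simpa only [hj hne hlt.le] using hlt)
  · refine Or.inr ⟨?_, fun i => (hle i).trans (G.cost_le_costLT i m), i₀,
      hi₀.trans_le (G.cost_le_costLT i₀ m)⟩
    by_cases hne : G.cost j ρ₁ = ⊤
    · exact hne.trans (top_le_iff.1 (htop hne ▸ G.cost_le_costLT j m)).symm
    · exact heq.trans (hj hne heq.ge).symm

end Cost

section Plays

variable (G : QRGame ι V) (v₀ : V) {p q : ι → List V → V}

lemma histFrom_length (h : List V) (t : ℕ) : (G.histFrom v₀ p h t).length = h.length + t := by
  induction t with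
  | zero => rfl
  | succ t ih => simp [histFrom, ih, Nat.add_assoc]

lemma cur_histFrom (t : ℕ) : cur v₀ (G.histFrom v₀ p [v₀] t) = G.outcome v₀ p t := by
  cases t with
  | zero => rfl
  | succ t =>
    have hlen : (G.histFrom v₀ p [v₀] t).length = t + 1 := by simp [histFrom_length, Nat.add_comm]
    simp [outcome, fullPlay, histFrom, cur, ← hlen]

lemma outcome_succ (t : ℕ) :
    G.outcome v₀ p (t + 1) = p (G.owner (G.outcome v₀ p t)) (G.histFrom v₀ p [v₀] t) := by
  rw [← cur_histFrom, ← cur_histFrom]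
  rfl

lemma histFrom_succ (t : ℕ) :
    G.histFrom v₀ p [v₀] (t + 1) = G.outcome v₀ p (t + 1) :: G.histFrom v₀ p [v₀] t := by
  rw [outcome_succ, ← cur_histFrom]
  rfl

lemma histFrom_congr {t : ℕ} (hag : ∀ k ≤ t, G.outcome v₀ p k = G.outcome v₀ q k) :
    G.histFrom v₀ p [v₀] t = G.histFrom v₀ q [v₀] t := by
  induction t with
  | zero => rfl
  | succ t ih =>
    rw [histFrom_succ, histFrom_succ, ih fun k hk => hag k (by omega), hag (t + 1) le_rfl]

lemma isHist_cons {x : V} {h : List V} (hh : G.IsHist v₀ h) (he : G.E (cur v₀ h) x) :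
    G.IsHist v₀ (x :: h) := by
  cases h with
  | nil => exact hh.elim
  | cons w t => exact ⟨he, hh⟩

variable {G v₀}

lemma IsStrat.isStratTrunc {i : ι} {σ : List V → V} (hσ : G.IsStrat v₀ i σ) (d : ℕ) :
    G.IsStratTrunc v₀ d i σ := fun h hh _ => hσ h hh

lemma isHist_histFrom {T : ℕ} (hp : ∀ i, G.IsStratTrunc v₀ T i (p i)) {t : ℕ} (ht : t ≤ T) :
    G.IsHist v₀ (G.histFrom v₀ p [v₀] t) := by
  induction t with
  | zero => rfl
  | succ t ih =>
    refine G.isHist_cons v₀ (ih (by omega)) (hp _ _ (ih (by omega)) ?_ rfl)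
    rw [histFrom_length, List.length_singleton]
    omega

lemma edge_outcome {T : ℕ} (hp : ∀ i, G.IsStratTrunc v₀ T i (p i)) {t : ℕ} (ht : t < T) :
    G.E (G.outcome v₀ p t) (G.outcome v₀ p (t + 1)) := by
  rw [outcome_succ, ← cur_histFrom]
  exact hp _ _ (isHist_histFrom hp ht.le)
    (by rw [histFrom_length, List.length_singleton]; omega) rfl

lemma outcome_eq_of_agree {p q : ι → List V → V} {T : ℕ}
    (hag : ∀ i h, h.length ≤ T → p i h = q i h) {t : ℕ} (ht : t ≤ T) :
    G.outcome v₀ p t = G.outcome v₀ q t := by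
  suffices G.histFrom v₀ p [v₀] t = G.histFrom v₀ q [v₀] t by
    rw [← cur_histFrom, this, cur_histFrom]
  induction t with
  | zero => rfl
  | succ t ih =>
    simp only [histFrom]
    rw [ih (by omega), hag _ _ (by rw [histFrom_length, List.length_singleton]; omega)]

lemma isStratTrunc_update [DecidableEq ι] {d : ℕ} {σ : ι → List V → V}
    (hσ : ∀ i, G.IsStratTrunc v₀ d i (σ i))
    {j : ι} {σ' : List V → V} (hσ' : G.IsStratTrunc v₀ d j σ') (i : ι) :
    G.IsStratTrunc v₀ d i (Function.update σ j σ' i) := by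
  rcases eq_or_ne i j with rfl | hij
  · simpa using hσ'
  · simpa [hij] using hσ i

end Plays

section Attractor

variable (G : QRGame ι V) (j : ι)

def attrStep (S : Set V) : Set V :=
  S ∪ {v | (G.owner v = j ∧ ∃ w, G.E v w ∧ w ∈ S) ∨ (G.owner v ≠ j ∧ ∀ w, G.E v w → w ∈ S)}

def attr : ℕ → Set V
  | 0 => G.F j
  | k + 1 => G.attrStep j (attr k)

lemma attr_mono : Monotone (G.attr j) :=
  monotone_nat_of_le_succ fun _ => Set.subset_union_left

noncomputable def attrMove (v : V) : V :=
  if h : ∃ k w, G.E v w ∧ w ∈ G.attr j k then (Nat.find_spec h).choose else (G.total v).choose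

lemma attrMove_edge (v : V) : G.E v (G.attrMove j v) := by
  unfold attrMove
  split_ifs with h
  exacts [(Nat.find_spec h).choose_spec.1, (G.total v).choose_spec]

lemma attrMove_mem {v w : V} {n : ℕ} (hw : G.E v w) (hwn : w ∈ G.attr j n) :
    G.attrMove j v ∈ G.attr j n := by
  have h : ∃ k w, G.E v w ∧ w ∈ G.attr j k := ⟨n, w, hw, hwn⟩
  rw [attrMove, dif_pos h]
  exact G.attr_mono j (Nat.find_min' h ⟨w, hw, hwn⟩) (Nat.find_spec h).choose_spec.2

lemma exists_le_mem_F_of_mem_attr (ρ : ℕ → V) {n s : ℕ} (hs : ρ s ∈ G.attr j n)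
    (hE : ∀ t, s ≤ t → t < s + n → G.E (ρ t) (ρ (t + 1)))
    (hmove : ∀ t, s ≤ t → t < s + n → G.owner (ρ t) = j → ρ (t + 1) = G.attrMove j (ρ t)) :
    ∃ l ≤ s + n, ρ l ∈ G.F j := by
  induction n generalizing s with
  | zero => exact ⟨s, le_rfl, hs⟩
  | succ n ih =>
    have hnext : ρ s ∈ G.attr j n ∨ ρ (s + 1) ∈ G.attr j n := by
      rcases hs with hs | ⟨ho, w, hw, hwn⟩ | ⟨_, hall⟩
      · exact Or.inl hs
      · exact Or.inr (hmove s le_rfl (by omega) ho ▸ G.attrMove_mem j hw hwn)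
      · exact Or.inr (hall _ (hE s le_rfl (by omega)))
    rcases hnext with h | h
    · obtain ⟨l, hl, hF⟩ := ih h (fun t h₁ h₂ => hE t h₁ (by omega))
        (fun t h₁ h₂ => hmove t h₁ (by omega))
      exact ⟨l, by omega, hF⟩
    · obtain ⟨l, hl, hF⟩ := ih h (fun t h₁ h₂ => hE t (by omega) (by omega))
        (fun t h₁ h₂ => hmove t (by omega) (by omega))
      exact ⟨l, by omega, hF⟩

variable [Fintype V]

/-- The iteration `attr j` stabilises by stage `card V`. -/
def attractor : Set V := G.attr j (Fintype.card V)

lemma attrStep_attractor : G.attrStep j (G.attractor j) = G.attractor j := by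
  obtain ⟨k, hk, hfix⟩ := (G.attr_mono j).exists_le_natCard_succ_eq
  have hstable : ∀ m, k ≤ m → G.attr j m = G.attr j k := by
    intro m hm
    induction m, hm using Nat.le_induction with
    | base => rfl
    | succ m _ ih => rw [attr, ih, ← attr, hfix]
  rw [Nat.card_eq_fintype_card] at hk
  change G.attr j (Fintype.card V + 1) = _
  rw [attractor, hstable _ hk, hstable _ (by omega)]

lemma F_subset_attractor : G.F j ⊆ G.attractor j := G.attr_mono j (Nat.zero_le _)

lemma not_mem_attractor_of_edge {v w : V} (hv : v ∉ G.attractor j) (ho : G.owner v = j)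
    (hw : G.E v w) : w ∉ G.attractor j := fun hmem =>
  hv (G.attrStep_attractor j ▸ Or.inr (Or.inl ⟨ho, w, hw, hmem⟩))

noncomputable def safeMove (v : V) : V :=
  if h : ∃ w, G.E v w ∧ w ∉ G.attractor j then h.choose else (G.total v).choose

lemma safeMove_edge (v : V) : G.E v (G.safeMove j v) := by
  unfold safeMove
  split_ifs with h
  exacts [h.choose_spec.1, (G.total v).choose_spec]

lemma safeMove_not_mem {v : V} (hv : v ∉ G.attractor j) (ho : G.owner v ≠ j) :
    G.safeMove j v ∉ G.attractor j := by
  have h : ∃ w, G.E v w ∧ w ∉ G.attractor j := by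
    by_contra! hall
    exact hv (G.attrStep_attractor j ▸ Or.inr (Or.inr ⟨ho, hall⟩))
  rw [safeMove, dif_pos h]
  exact h.choose_spec.2

variable {G : QRGame ι V} {v₀ : V} [DecidableEq ι] in
/-- Otherwise `j` could switch to `attrMove` at time `s` and reach `F j` within `𝒯^d`. -/
lemma IsSecureTrunc.outcome_update_not_mem_attractor {d : ℕ} {σ : ι → List V → V}
    (hσ : ∀ i, G.IsStratTrunc v₀ d i (σ i)) (hsec : G.IsSecureTrunc v₀ d σ) {j : ι}
    (hj : G.costLT j (G.outcome v₀ σ) (d + 1) = ⊤) {σ' : List V → V}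
    (hσ' : G.IsStratTrunc v₀ d j σ') {s : ℕ} (hs : s + Fintype.card V ≤ d) :
    G.outcome v₀ (Function.update σ j σ') s ∉ G.attractor j := by
  intro hmem
  set σA : List V → V := fun h => if h.length ≤ s then σ' h else G.attrMove j (cur v₀ h)
  have hσA : G.IsStratTrunc v₀ d j σA := by
    intro h hh hlen ho
    simp only [σA]
    split_ifs
    exacts [hσ' h hh hlen ho, G.attrMove_edge j _]
  have hagree : ∀ t ≤ s,
      G.outcome v₀ (Function.update σ j σA) t = G.outcome v₀ (Function.update σ j σ') t := by
    refine fun t => outcome_eq_of_agree fun i h hlen => ?_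
    rcases eq_or_ne i j with rfl | hij
    · simp [σA, hlen]
    · simp [hij]
  have hvalid := isStratTrunc_update hσ hσA
  obtain ⟨l, hl, hlF⟩ := G.exists_le_mem_F_of_mem_attr j (G.outcome v₀ (Function.update σ j σA))
    (n := Fintype.card V) (s := s) (hagree s le_rfl ▸ hmem)
    (fun t _ ht => edge_outcome hvalid (by omega))
    (fun t hst _ ho => by
      rw [outcome_succ, ho, Function.update_self, ← cur_histFrom]
      exact if_neg (by rw [histFrom_length, List.length_singleton]; omega))
  refine hsec ⟨j, σA, hσA, Or.inl ?_⟩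
  change G.costLT j (G.outcome v₀ (Function.update σ j σA)) (d + 1) <
    G.costLT j (G.outcome v₀ σ) (d + 1)
  rw [hj]
  have hcost : G.cost j (G.outcome v₀ (Function.update σ j σA)) ≤ l := G.cost_le j hlF
  rw [G.costLT_eq_cost j (hcost.trans_lt (by exact_mod_cast (show l < d + 1 by omega)))]
  exact hcost.trans_lt (ENat.natCast_lt_top l)


end Attractor

section Lasso

variable (a b : ℕ)

/-- Positions along the lasso `ρ₀ … ρ_{b-1} (ρ_a … ρ_{b-1})^ω`. -/
def lassoIdx : ℕ → ℕ
  | 0 => 0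
  | t + 1 => if lassoIdx t + 1 = b then a else lassoIdx t + 1

def lasso (ρ : ℕ → V) (t : ℕ) : V := ρ (lassoIdx a b t)

variable {a b}

lemma lassoIdx_of_lt {t : ℕ} (ht : t < b) : lassoIdx a b t = t := by
  induction t with
  | zero => rfl
  | succ t ih => rw [lassoIdx, ih (by omega), if_neg (by omega)]

lemma lassoIdx_lt (hab : a < b) (t : ℕ) : lassoIdx a b t < b := by
  induction t with
  | zero => exact Nat.zero_lt_of_lt hab
  | succ t ih =>
    rw [lassoIdx]
    split_ifs <;> omega

lemma lasso_of_lt (ρ : ℕ → V) {t : ℕ} (ht : t < b) : lasso a b ρ t = ρ t := by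
  rw [lasso, lassoIdx_of_lt ht]

lemma lasso_edge (G : QRGame ι V) {ρ : ℕ → V} (hab : a < b) (hρ : ρ a = ρ b)
    (hE : ∀ t < b, G.E (ρ t) (ρ (t + 1))) (t : ℕ) : G.E (lasso a b ρ t) (lasso a b ρ (t + 1)) := by
  have hlt := lassoIdx_lt hab t
  rw [lasso, lasso, lassoIdx]
  split_ifs with h
  · rw [hρ]
    simpa only [h] using hE _ hlt
  · exact hE _ hlt

lemma cost_lasso {G : QRGame ι V} (i : ι) {ρ : ℕ → V} {n : ℕ} (hab : a < b) (hbn : b ≤ n)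
    (hfin : G.costLT i ρ n ≠ ⊤ → G.costLT i ρ n < a) :
    G.cost i (lasso a b ρ) = G.costLT i ρ n := by
  by_cases htop : G.costLT i ρ n = ⊤
  · have hn : (n : ℕ∞) ≤ G.cost i ρ := by
      by_contra! h
      exact (G.costLT_eq_cost i h ▸ ne_top_of_lt h) htop
    rw [htop, cost_eq_top_iff]
    intro l hl
    have hle : n ≤ lassoIdx a b l := by exact_mod_cast hn.trans (G.cost_le i hl)
    have := lassoIdx_lt hab l
    omega
  · have hlt := G.cost_lt_of_costLT_ne_top i htop
    rw [G.costLT_eq_cost i hlt] at hfin htop ⊢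
    exact G.cost_eq_of_eqOn i (fun k hk => (lasso_of_lt ρ (by omega)).symm) (hfin htop)

end Lasso

section FirstDeviation

/-- Where (the reversed history) `h` first leaves the path `π`: the index of the first vertex
off `π`, together with the last vertex of `h` still on `π`. -/
noncomputable def firstDev (v₀ : V) (π : ℕ → V) : List V → Option (ℕ × V)
  | [] => none
  | x :: h => (firstDev v₀ π h).or (if x = π h.length then none else some (h.length, cur v₀ h))

lemma cur_of_firstDev_eq_none {v₀ : V} {π : ℕ → V} {h : List V} (hdev : firstDev v₀ π h = none)
    (hne : h ≠ []) : cur v₀ h = π (h.length - 1) := by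
  obtain ⟨x, h, rfl⟩ := List.exists_cons_of_ne_nil hne
  simp only [firstDev, Option.or_eq_none_iff, ite_eq_left_iff, reduceCtorEq, imp_false,
    not_not] at hdev
  simpa [cur] using hdev.2

variable {G : QRGame ι V} {p : ι → List V → V} {v₀ : V} {π : ℕ → V}

lemma firstDev_histFrom_eq_none {t : ℕ} (hag : ∀ k ≤ t, G.outcome v₀ p k = π k) :
    firstDev v₀ π (G.histFrom v₀ p [v₀] t) = none := by
  induction t with
  | zero => simp [histFrom, firstDev, ← hag 0 le_rfl, outcome, fullPlay]
  | succ t ih =>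
    rw [histFrom_succ]
    simp [firstDev, ih fun k hk => hag k (by omega), histFrom_length, Nat.add_comm, hag]

variable (G v₀) in
structure LeavesAt (p : ι → List V → V) (π : ℕ → V) (D : ℕ) : Prop where
  eq_of_lt : ∀ k < D, G.outcome v₀ p k = π k
  ne : G.outcome v₀ p D ≠ π D

lemma firstDev_histFrom_eq_some {D t : ℕ} (hD : G.LeavesAt v₀ p π D) (ht : D ≤ t) :
    firstDev v₀ π (G.histFrom v₀ p [v₀] t) = some (D, G.outcome v₀ p (D - 1)) := by
  induction t, ht using Nat.le_induction with
  | base =>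
    cases D with
    | zero => simpa [histFrom, firstDev, outcome, fullPlay, cur] using hD.ne
    | succ D =>
      rw [histFrom_succ]
      simp [firstDev, firstDev_histFrom_eq_none fun k (hk : k ≤ D) => hD.eq_of_lt k (by omega),
        histFrom_length, Nat.add_comm, hD.ne, cur_histFrom]
  | succ t _ ih => rw [histFrom_succ, firstDev, ih, Option.some_or]

end FirstDeviation

lemma finMem_of_eventually_factors [Finite V] {S : Type} {σ : List V → V} (K : ℕ) (f : List V → S)
    (upd : S → V → S) (out : S → V) (hfin : (f '' {h | K ≤ h.length}).Finite)
    (hupd : ∀ x h, K ≤ h.length → f (x :: h) = upd (f h) x)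
    (hout : ∀ h, K ≤ h.length → σ h = out (f h)) : FinMem σ := by
  have hrun : ∀ h, K ≤ h.length → ∀ δ : List V,
      f (δ ++ h) = δ.foldr (fun x s => upd s x) (f h) := by
    intro h hh δ
    induction δ with
    | nil => rfl
    | cons x δ ih =>
      rw [List.cons_append, hupd _ _ (by simp only [List.length_append]; omega), ih,
        List.foldr_cons]
  refine (((List.finite_length_lt V K).image fun h δ => σ (δ ++ h)).union
    (hfin.image fun s δ => out (δ.foldr (fun x s => upd s x) s))).subset ?_
  rintro _ ⟨h, rfl⟩
  rcases lt_or_ge h.length K with hlt | hge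
  · exact Or.inl ⟨h, hlt, rfl⟩
  · refine Or.inr ⟨f h, ⟨h, hge, rfl⟩, funext fun δ => ?_⟩
    change _ = σ (δ ++ h)
    rw [hout _ (by simp only [List.length_append]; omega), hrun h hge]

section PunishingStrategy

variable (G : QRGame ι V) (v₀ : V) [Fintype V]

noncomputable def punishStrat (π : ℕ → V) (σ : ι → List V → V) (T L : ℕ) (h : List V) : V :=
  match firstDev v₀ π h with
  | none => π h.length
  | some (k, u) =>
    if k ≤ T ∧ h.length ≤ L then σ (G.owner (cur v₀ h)) h else G.safeMove (G.owner u) (cur v₀ h)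

noncomputable abbrev punishProfile (π : ℕ → V) (σ : ι → List V → V) (T L : ℕ) :
    ι → List V → V :=
  fun _ => G.punishStrat v₀ π σ T L

lemma finMem_punishStrat {a b : ℕ} (hab : a < b) (ρ : ℕ → V) (σ : ι → List V → V) (T L : ℕ) :
    FinMem (G.punishStrat v₀ (lasso a b ρ) σ T L) := by
  refine finMem_of_eventually_factors (L + 1)
    (fun h => ((firstDev v₀ (lasso a b ρ) h).map Prod.snd,
      lassoIdx a b h.length, cur v₀ h))
    (fun s x => (s.1.or (if x = ρ s.2.1 then none else some s.2.2),
      if s.2.1 + 1 = b then a else s.2.1 + 1, x))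
    (fun s => s.1.elim (ρ s.2.1) fun u => G.safeMove (G.owner u) s.2.2) ?_ ?_ ?_
  · refine (Set.finite_univ.prod ((Set.finite_Iio b).prod Set.finite_univ)).subset ?_
    rintro _ ⟨h, -, rfl⟩
    exact ⟨trivial, lassoIdx_lt hab _, trivial⟩
  · intro x h _
    simp only [firstDev, lassoIdx, List.length_cons]
    cases firstDev v₀ (lasso a b ρ) h <;> simp [apply_ite, cur, lasso]
  · intro h hh
    unfold punishStrat
    split
    · next hdev => simp [hdev, lasso]
    · next k u hdev => simp [hdev, show ¬ h.length ≤ L by omega]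

variable {G v₀} {π : ℕ → V} {σ : ι → List V → V} {T L : ℕ}

lemma punishStrat_isStrat {d : ℕ} (hπ : ∀ t, G.E (π t) (π (t + 1)))
    (hσ : ∀ i, G.IsStratTrunc v₀ d i (σ i)) (hL : L ≤ d) (i : ι) :
    G.IsStrat v₀ i (G.punishStrat v₀ π σ T L) := by
  intro h hh _
  unfold punishStrat
  split
  · next hdev =>
    have hne : h ≠ [] := by rintro rfl; exact hh
    have hlen : h.length - 1 + 1 = h.length := Nat.sub_add_cancel (List.length_pos_iff.2 hne)
    rw [cur_of_firstDev_eq_none hdev hne, ← hlen]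
    exact hπ _
  · split_ifs with hc
    exacts [hσ _ h hh (hc.2.trans hL) rfl, G.safeMove_edge _ _]

lemma outcome_punishProfile (hπ0 : π 0 = v₀) (t : ℕ) :
    G.outcome v₀ (G.punishProfile v₀ π σ T L) t = π t := by
  induction t using Nat.strong_induction_on with
  | _ t ih =>
    cases t with
    | zero => exact hπ0.symm
    | succ t =>
      rw [outcome_succ, punishProfile, punishStrat,
        firstDev_histFrom_eq_none fun k hk => ih k (by omega)]
      simp [histFrom_length, Nat.add_comm]

section Deviation

variable {j : ι} {p : ι → List V → V} {D : ℕ}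

lemma outcome_deviation_succ_of_lt (hp : ∀ i ≠ j, p i = G.punishStrat v₀ π σ T L)
    (hD : G.LeavesAt v₀ p π D) {t : ℕ} (ht : t < D) (ho : G.owner (G.outcome v₀ p t) ≠ j) :
    G.outcome v₀ p (t + 1) = π (t + 1) := by
  rw [outcome_succ, hp _ ho, punishStrat,
    firstDev_histFrom_eq_none fun k hk => hD.eq_of_lt k (by omega)]
  simp [histFrom_length, Nat.add_comm]

lemma outcome_deviation_succ_of_le (hp : ∀ i ≠ j, p i = G.punishStrat v₀ π σ T L)
    (hD : G.LeavesAt v₀ p π D) {t : ℕ} (ht : D ≤ t) (ho : G.owner (G.outcome v₀ p t) ≠ j) :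
    G.outcome v₀ p (t + 1) =
      if D ≤ T ∧ t + 1 ≤ L then σ (G.owner (G.outcome v₀ p t)) (G.histFrom v₀ p [v₀] t)
      else G.safeMove (G.owner (G.outcome v₀ p (D - 1))) (G.outcome v₀ p t) := by
  rw [outcome_succ, hp _ ho, punishStrat, firstDev_histFrom_eq_some hD ht]
  simp [histFrom_length, cur_histFrom, Nat.add_comm]

lemma owner_deviation (hp : ∀ i ≠ j, p i = G.punishStrat v₀ π σ T L) (hπ0 : π 0 = v₀)
    (hD : G.LeavesAt v₀ p π D) : G.owner (G.outcome v₀ p (D - 1)) = j := by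
  by_contra ho
  have hD0 : D - 1 + 1 = D := Nat.sub_add_cancel (Nat.pos_of_ne_zero (by
    rintro rfl
    exact hD.ne hπ0.symm))
  exact hD.ne (hD0 ▸ outcome_deviation_succ_of_lt hp hD (by omega) ho)

lemma outcome_deviation_not_mem_attractor (hp : ∀ i ≠ j, p i = G.punishStrat v₀ π σ T L)
    (hπ0 : π 0 = v₀) (hπW : ∀ t, π t ∉ G.attractor j)
    (hE : ∀ t, G.E (G.outcome v₀ p t) (G.outcome v₀ p (t + 1))) (hD : G.LeavesAt v₀ p π D)
    (hfollow : D ≤ T → ∀ t ≤ L, G.outcome v₀ p t ∉ G.attractor j) (t : ℕ) :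
    G.outcome v₀ p t ∉ G.attractor j := by
  induction t with
  | zero => exact hπ0 ▸ hπW 0
  | succ t ih =>
    by_cases ho : G.owner (G.outcome v₀ p t) = j
    · exact G.not_mem_attractor_of_edge j ih ho (hE t)
    by_cases hc : D ≤ T ∧ t + 1 ≤ L
    · exact hfollow hc.1 _ hc.2
    rcases lt_or_ge t D with ht | ht
    · rw [outcome_deviation_succ_of_lt hp hD ht ho]
      exact hπW _
    · rw [outcome_deviation_succ_of_le hp hD ht ho, if_neg hc, owner_deviation hp hπ0 hD]
      exact G.safeMove_not_mem j ih ho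

lemma outcome_deviation_eq_update [DecidableEq ι] {σ' : List V → V}
    (hD : G.LeavesAt v₀ (Function.update (G.punishProfile v₀ π σ T L) j σ') π D)
    (hπρ : ∀ k < D, π k = G.outcome v₀ σ k) (hDT : D ≤ T) {t : ℕ} (ht : t ≤ L) :
    G.outcome v₀ (Function.update (G.punishProfile v₀ π σ T L) j σ') t =
      G.outcome v₀ (Function.update σ j σ') t := by
  set p := Function.update (G.punishProfile v₀ π σ T L) j σ'
  have hp : ∀ i ≠ j, p i = G.punishStrat v₀ π σ T L := fun i hi => Function.update_of_ne hi _ _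
  suffices G.histFrom v₀ p [v₀] t = G.histFrom v₀ (Function.update σ j σ') [v₀] t by
    rw [← cur_histFrom, this, cur_histFrom]
  induction t with
  | zero => rfl
  | succ t ih =>
    simp only [histFrom]
    rw [← ih (by omega), cur_histFrom]
    congr 1
    by_cases ho : G.owner (G.outcome v₀ p t) = j
    · simp [p, ho]
    rw [Function.update_of_ne ho, ← outcome_succ (p := p)]
    rcases lt_or_ge t D with htD | htD
    · have hsucc := outcome_deviation_succ_of_lt hp hD htD ho
      have htD' : t + 1 < D := lt_of_le_of_ne htD fun h => hD.ne (h ▸ hsucc)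
      have hpre : ∀ k ≤ t, G.outcome v₀ p k = G.outcome v₀ σ k :=
        fun k hk => (hD.eq_of_lt k (by omega)).trans (hπρ k (by omega))
      rw [hsucc, hπρ _ htD', G.histFrom_congr v₀ hpre, hpre t le_rfl, outcome_succ]
    · rw [outcome_deviation_succ_of_le hp hD htD ho, if_pos ⟨hDT, ht⟩]

end Deviation

end PunishingStrategy

section Security

variable [Fintype V]

lemma lt_devBoundTrunc {G : QRGame ι V} {v₀ : V} {d Γ : ℕ} {σ : ι → List V → V}
    (hgoal : G.GoalOptTrunc v₀ d σ Γ) {i : ι}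
    (hi : G.costLT i (G.outcome v₀ σ) (d + 1) ≠ ⊤) :
    G.costLT i (G.outcome v₀ σ) (d + 1) < G.devBoundTrunc v₀ d σ := by
  have hsup : (⨆ i ∈ {i : ι | G.costLT i (G.outcome v₀ σ) (d + 1) ≠ ⊤},
      G.costLT i (G.outcome v₀ σ) (d + 1)) ≠ ⊤ :=
    ne_top_of_le_ne_top (ENat.natCast_ne_top Γ) (iSup₂_le fun i hi => (hgoal i hi).le)
  have hV : 0 < Fintype.card V := Fintype.card_pos_iff.2 ⟨v₀⟩
  calc G.costLT i (G.outcome v₀ σ) (d + 1)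
      ≤ ⨆ i ∈ {i : ι | G.costLT i (G.outcome v₀ σ) (d + 1) ≠ ⊤},
          G.costLT i (G.outcome v₀ σ) (d + 1) :=
        le_iSup₂ (f := fun i _ => G.costLT i (G.outcome v₀ σ) (d + 1)) i hi
    _ < G.devBoundTrunc v₀ d σ := by
        rw [devBoundTrunc, ← ENat.natCast_toNat hsup]
        exact_mod_cast Nat.lt_add_of_pos_right hV

lemma devBoundTrunc_le {G : QRGame ι V} {v₀ : V} {d Γ : ℕ} {σ : ι → List V → V}
    (hgoal : G.GoalOptTrunc v₀ d σ Γ) :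
    G.devBoundTrunc v₀ d σ ≤ Γ + Fintype.card V := by
  refine Nat.add_le_add_right ?_ _
  exact ENat.toNat_le_of_le_natCast (iSup₂_le fun i hi => (hgoal i hi).le)

variable [DecidableEq ι]

structure IsLassoSetting (G : QRGame ι V) (v₀ : V) (d N : ℕ) (σ : ι → List V → V) (a b : ℕ) :
    Prop where
  isStratTrunc : ∀ i, G.IsStratTrunc v₀ d i (σ i)
  isSecureTrunc : G.IsSecureTrunc v₀ d σ
  not_prec : ∀ j σ', G.IsStratTrunc v₀ d j σ' →
    ¬ Prec j (fun i => G.costLT i (G.outcome v₀ σ) N)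
      (fun i => G.costLT i (G.outcome v₀ (Function.update σ j σ')) N)
  costLT_lt : ∀ i, G.costLT i (G.outcome v₀ σ) (d + 1) ≠ ⊤ →
    G.costLT i (G.outcome v₀ σ) (d + 1) < N
  horizon_le_a : N ≤ a
  a_lt_b : a < b
  b_add_card_le : b + Fintype.card V ≤ d
  outcome_a_eq_b : G.outcome v₀ σ a = G.outcome v₀ σ b

namespace IsLassoSetting

variable {G : QRGame ι V} {v₀ : V} {d N a b : ℕ} {σ : ι → List V → V}

lemma horizon_lt_b (S : G.IsLassoSetting v₀ d N σ a b) : N < b :=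
  S.horizon_le_a.trans_lt S.a_lt_b

lemma edge (S : G.IsLassoSetting v₀ d N σ a b) (t : ℕ) :
    G.E (lasso a b (G.outcome v₀ σ) t) (lasso a b (G.outcome v₀ σ) (t + 1)) :=
  lasso_edge G S.a_lt_b S.outcome_a_eq_b (fun _ ht => edge_outcome S.isStratTrunc
    (by have := S.b_add_card_le; omega)) t

lemma cost_lasso (S : G.IsLassoSetting v₀ d N σ a b) (i : ι) :
    G.cost i (lasso a b (G.outcome v₀ σ)) = G.costLT i (G.outcome v₀ σ) (d + 1) :=
  QRGame.cost_lasso i S.a_lt_b (by have := S.b_add_card_le; omega)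
    fun hi => (S.costLT_lt i hi).trans_le (by exact_mod_cast S.horizon_le_a)

lemma cost_lasso_lt (S : G.IsLassoSetting v₀ d N σ a b) {i : ι}
    (hi : G.cost i (lasso a b (G.outcome v₀ σ)) ≠ ⊤) :
    G.cost i (lasso a b (G.outcome v₀ σ)) < N :=
  S.cost_lasso i ▸ S.costLT_lt i (S.cost_lasso i ▸ hi)

lemma isStrat_punishStrat (S : G.IsLassoSetting v₀ d N σ a b) (i : ι) :
    G.IsStrat v₀ i (G.punishStrat v₀ (lasso a b (G.outcome v₀ σ)) σ b N) :=
  punishStrat_isStrat S.edge S.isStratTrunc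
    (by have := S.horizon_lt_b; have := S.b_add_card_le; omega) i

lemma not_mem_attractor_lasso (S : G.IsLassoSetting v₀ d N σ a b) {j : ι}
    (hj : G.costLT j (G.outcome v₀ σ) (d + 1) = ⊤) (t : ℕ) :
    lasso a b (G.outcome v₀ σ) t ∉ G.attractor j := by
  simpa [lasso] using S.isSecureTrunc.outcome_update_not_mem_attractor S.isStratTrunc hj
    (S.isStratTrunc j) (s := lassoIdx a b t)
    (by have := lassoIdx_lt S.a_lt_b t; have := S.b_add_card_le; omega)

lemma cost_deviation_eq_top (S : G.IsLassoSetting v₀ d N σ a b) {j : ι} {σ' : List V → V}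
    {D : ℕ} (hσ' : G.IsStrat v₀ j σ')
    (hD : G.LeavesAt v₀ (Function.update (G.punishProfile v₀ (lasso a b (G.outcome v₀ σ)) σ b N)
      j σ') (lasso a b (G.outcome v₀ σ)) D)
    (hj : G.cost j (lasso a b (G.outcome v₀ σ)) = ⊤) :
    G.cost j (G.outcome v₀
      (Function.update (G.punishProfile v₀ (lasso a b (G.outcome v₀ σ)) σ b N) j σ')) = ⊤ := by
  rw [S.cost_lasso] at hj
  have hvalid : ∀ t i, G.IsStratTrunc v₀ t i
      (Function.update (G.punishProfile v₀ (lasso a b (G.outcome v₀ σ)) σ b N) j σ' i) :=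
    fun t => isStratTrunc_update (fun i => (S.isStrat_punishStrat i).isStratTrunc t)
      (hσ'.isStratTrunc t)
  have hW := outcome_deviation_not_mem_attractor (fun i hi => Function.update_of_ne hi _ _) rfl
    (S.not_mem_attractor_lasso hj) (fun t => edge_outcome (hvalid (t + 1)) t.lt_succ_self) hD
    fun hDb t ht => outcome_deviation_eq_update hD
      (fun k hk => lasso_of_lt _ (by omega)) hDb ht ▸
      S.isSecureTrunc.outcome_update_not_mem_attractor S.isStratTrunc hj (hσ'.isStratTrunc d)
        (by have := S.horizon_lt_b; have := S.b_add_card_le; omega)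
  exact (cost_eq_top_iff _ _).2 fun l hl => hW l (G.F_subset_attractor j hl)

theorem isSecure (S : G.IsLassoSetting v₀ d N σ a b) :
    G.IsSecure v₀ (G.punishProfile v₀ (lasso a b (G.outcome v₀ σ)) σ b N) := by
  set π := lasso a b (G.outcome v₀ σ)
  rintro ⟨j, σ', hσ', hprec⟩
  set p := Function.update (G.punishProfile v₀ π σ b N) j σ'
  change Prec j (fun i => G.cost i (G.outcome v₀ (G.punishProfile v₀ π σ b N)))
    (fun i => G.cost i (G.outcome v₀ p)) at hprec
  have hπ0 : π 0 = v₀ := rfl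
  rw [funext (outcome_punishProfile (σ := σ) (T := b) (L := N) hπ0)] at hprec
  by_cases hall : ∀ t, G.outcome v₀ p t = π t
  · exact prec_irrefl j _ (funext hall ▸ hprec)
  rw [not_forall] at hall
  have hD : G.LeavesAt v₀ p π (Nat.find hall) :=
    ⟨fun k hk => not_not.1 (Nat.find_min hall hk), Nat.find_spec hall⟩
  have htop := S.cost_deviation_eq_top hσ' hD
  by_cases hDb : Nat.find hall ≤ b
  · refine S.not_prec j σ' (hσ'.isStratTrunc d) ?_
    have hρπ : ∀ i, G.costLT i (G.outcome v₀ σ) N = G.costLT i π N := fun i =>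
      G.costLT_congr i fun k hk =>
        (lasso_of_lt _ (by have := S.horizon_lt_b; omega)).symm
    have hqp : ∀ i, G.costLT i (G.outcome v₀ (Function.update σ j σ')) N =
        G.costLT i (G.outcome v₀ p) N := fun i =>
      G.costLT_congr i fun k hk => (outcome_deviation_eq_update hD
        (fun k hk => lasso_of_lt _ (by omega)) hDb hk.le).symm
    simpa only [hρπ, hqp] using prec_costLT_of_prec_cost (fun i => S.cost_lasso_lt) htop hprec
  · refine not_prec_of_eq_of_ne_top (fun i hi => ?_) htop hprec
    refine G.cost_eq_of_eqOn i (fun k hk => (hD.eq_of_lt k hk).symm) ?_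
    refine (S.cost_lasso_lt hi).trans_le ?_
    have := S.horizon_lt_b
    exact_mod_cast (show N ≤ Nat.find hall by omega)

end IsLassoSetting

end Security

end QRGame

theorem secure_equilibrium_from_truncated_general
    {ι V : Type} [Fintype V] [DecidableEq ι]
    (G : QRGame ι V) (v₀ : V) (Γ d : ℕ)
    (hd : d = Γ + 3 * Fintype.card V)
    (hex : ∃ σ : ι → List V → V, (∀ i, G.IsStratTrunc v₀ d i (σ i)) ∧
      G.IsSecureTrunc v₀ d σ ∧ G.GoalOptTrunc v₀ d σ Γ ∧ G.DevOptTrunc v₀ d σ) :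
    ∃ τ : ι → List V → V, G.IsProfile v₀ τ ∧ G.IsSecure v₀ τ ∧
      ∀ i, QRGame.FinMem (τ i) := by
  obtain ⟨σ, hσ, hsec, hgoal, hdevopt⟩ := hex
  have hN := QRGame.devBoundTrunc_le hgoal
  obtain ⟨a, b, hNa, hab, hbN, hρ⟩ :=
    Fintype.exists_lt_le_add_card_eq (G.outcome v₀ σ) (G.devBoundTrunc v₀ d σ)
  have S : G.IsLassoSetting v₀ d _ σ a b :=
    ⟨hσ, hsec, hdevopt, fun _ => QRGame.lt_devBoundTrunc hgoal, hNa, hab, by omega, hρ⟩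
  exact ⟨_, S.isStrat_punishStrat, S.isSecure, fun _ => G.finMem_punishStrat v₀ hab _ σ b _⟩

/-- Let `Γ = 2·|Π|·|V|` and `d = Γ + 3·|V|`.  If there exists a goal-optimal
and dev-optimal secure equilibrium in the truncated game `𝒯^d`, then there
exists a finite-memory secure equilibrium in `(G, v₀)`. -/
theorem secure_equilibrium_from_truncated
    {ι V : Type} [Fintype ι] [Fintype V] [DecidableEq ι]
    (G : QRGame ι V) (v₀ : V) (Γ d : ℕ)
    (hΓ : Γ = 2 * Fintype.card ι * Fintype.card V)
    (hd : d = Γ + 3 * Fintype.card V)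
    (hex : ∃ σ : ι → List V → V, (∀ i, G.IsStratTrunc v₀ d i (σ i)) ∧
      G.IsSecureTrunc v₀ d σ ∧ G.GoalOptTrunc v₀ d σ Γ ∧ G.DevOptTrunc v₀ d σ) :
    ∃ τ : ι → List V → V, G.IsProfile v₀ τ ∧ G.IsSecure v₀ τ ∧
      ∀ i, QRGame.FinMem (τ i) :=
  secure_equilibrium_from_truncated_general G v₀ Γ d hd hex
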